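/- Under the assumptions of the previous Gaussian density estimate, for the density φ_{s,r} one also has the rectangle increment bound: |φ_{s,r}(x,y) − φ_{s,r}(x,b) − φ_{s,r}(a,y) + φ_{s,r}(a,b)| ≤ 2·((sr)^{βH/2}/ρ^{1+β})·|(x−a)(y−b)|^{β/2} for all a,b,x,y ∈ ℝ and β ∈ [0,1]. -/

import Mathlib

/-!
Writing `R = r ^ H` and completing the square in `x`, the density factors as
`φ x y = (2πρ)⁻¹ · exp (-y² / (2R²)) · g ((R x - μ y / R) / ρ)` with `g p = exp (-p² / 2)`.
Since `g` is 1-Lipschitz with values in `(0, 1]`, it is `β`-Hölder with constant `1`, which bounds the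
rectangle increment by `(πρ)⁻¹ (R |x - a| / ρ) ^ β`; the same argument with the roles of the variables
exchanged gives `(πρ)⁻¹ (s ^ H |y - b| / ρ) ^ β`, and the geometric mean of the two bounds is the claim.
-/

open Real

def rectIncrement (φ : ℝ → ℝ → ℝ) (a b x y : ℝ) : ℝ :=
  φ x y - φ x b - φ a y + φ a b

lemma rectIncrement_swap (φ : ℝ → ℝ → ℝ) (a b x y : ℝ) :
    rectIncrement (fun u v => φ v u) b a y x = rectIncrement φ a b x y := by
  unfold rectIncrement
  ring

lemma abs_exp_neg_sq_half_sub_le (p q : ℝ) :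
    |exp (-p ^ 2 / 2) - exp (-q ^ 2 / 2)| ≤ |p - q| := by
  have hderiv : ∀ t : ℝ, HasDerivAt (fun u : ℝ => exp (-u ^ 2 / 2)) (exp (-t ^ 2 / 2) * -t) t := by
    intro t
    have h : HasDerivAt (fun u : ℝ => -u ^ 2 / 2) (-t) t :=
      ((hasDerivAt_pow 2 t).neg.div_const 2).congr_deriv (by push_cast; ring)
    exact h.exp
  have hbound : ∀ t : ℝ, ‖exp (-t ^ 2 / 2) * -t‖ ≤ 1 := by
    intro t
    -- `|t| ≤ 1 + t² / 2 ≤ exp (t² / 2)`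
    have ht : |t| ≤ exp (t ^ 2 / 2) := by
      nlinarith [add_one_le_exp (t ^ 2 / 2), sq_abs t, sq_nonneg (|t| - 1)]
    calc ‖exp (-t ^ 2 / 2) * -t‖ = exp (-t ^ 2 / 2) * |t| := by
          rw [norm_mul, norm_neg, norm_of_nonneg (exp_pos _).le, norm_eq_abs]
      _ ≤ exp (-t ^ 2 / 2) * exp (t ^ 2 / 2) := by gcongr
      _ = 1 := by rw [← exp_add]; ring_nf; exact exp_zero
  have h := Convex.norm_image_sub_le_of_norm_deriv_le (fun t _ => (hderiv t).differentiableAt)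
    (fun t _ => by rw [(hderiv t).deriv]; exact hbound t) convex_univ (Set.mem_univ q)
    (Set.mem_univ p)
  simpa [Real.norm_eq_abs] using h

lemma le_rpow_of_le_of_le_one {d t β : ℝ} (ht : 0 ≤ t) (hβ0 : 0 ≤ β) (hβ1 : β ≤ 1)
    (hdt : d ≤ t) (hd1 : d ≤ 1) : d ≤ t ^ β := by
  rcases le_total t 1 with h | h
  · calc d ≤ t := hdt
      _ = t ^ (1 : ℝ) := (rpow_one t).symm
      _ ≤ t ^ β := rpow_le_rpow_of_exponent_ge' ht h hβ0 hβ1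
  · exact hd1.trans (one_le_rpow h hβ0)

lemma abs_exp_neg_sq_half_sub_le_rpow {β : ℝ} (hβ0 : 0 ≤ β) (hβ1 : β ≤ 1) (p q : ℝ) :
    |exp (-p ^ 2 / 2) - exp (-q ^ 2 / 2)| ≤ |p - q| ^ β := by
  have hle_one : ∀ u : ℝ, exp (-u ^ 2 / 2) ≤ 1 := fun u => by
    rw [exp_le_one_iff]
    nlinarith [sq_nonneg u]
  exact le_rpow_of_le_of_le_one (abs_nonneg _) hβ0 hβ1 (abs_exp_neg_sq_half_sub_le p q)
    (abs_sub_le_of_nonneg_of_le (exp_pos _).le (hle_one p) (exp_pos _).le (hle_one q))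

lemma abs_rectIncrement_le_of_eq_mul_gaussian {φ : ℝ → ℝ → ℝ} {w f : ℝ → ℝ} {C κ β : ℝ}
    (hβ0 : 0 ≤ β) (hβ1 : β ≤ 1) (hw0 : ∀ y, 0 ≤ w y) (hwC : ∀ y, w y ≤ C)
    (hφ : ∀ x y, φ x y = w y * exp (-(κ * x - f y) ^ 2 / 2)) (a b x y : ℝ) :
    |rectIncrement φ a b x y| ≤ 2 * C * |κ * (x - a)| ^ β := by
  have hslice : ∀ v, |w v * (exp (-(κ * x - f v) ^ 2 / 2) - exp (-(κ * a - f v) ^ 2 / 2))|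
      ≤ C * |κ * (x - a)| ^ β := fun v => by
    rw [abs_mul, abs_of_nonneg (hw0 v)]
    have hdiff : κ * x - f v - (κ * a - f v) = κ * (x - a) := by ring
    have := abs_exp_neg_sq_half_sub_le_rpow hβ0 hβ1 (κ * x - f v) (κ * a - f v)
    rw [hdiff] at this
    exact mul_le_mul (hwC v) this (abs_nonneg _) ((hw0 v).trans (hwC v))
  calc |rectIncrement φ a b x y|
      = |w y * (exp (-(κ * x - f y) ^ 2 / 2) - exp (-(κ * a - f y) ^ 2 / 2))
          - w b * (exp (-(κ * x - f b) ^ 2 / 2) - exp (-(κ * a - f b) ^ 2 / 2))| := by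
        rw [rectIncrement, hφ x y, hφ x b, hφ a y, hφ a b]
        ring_nf
    _ ≤ C * |κ * (x - a)| ^ β + C * |κ * (x - a)| ^ β :=
        (abs_sub _ _).trans (add_le_add (hslice y) (hslice b))
    _ = 2 * C * |κ * (x - a)| ^ β := by ring

lemma abs_rectIncrement_gaussianDensity_le {H s r μ ρ β : ℝ} (hs : 0 < s) (hr : 0 < r)
    (hρ : 0 < ρ) (hρ2 : ρ ^ 2 = (s * r) ^ (2 * H) - μ ^ 2) {φ : ℝ → ℝ → ℝ}
    (hφ : ∀ x y : ℝ, φ x y =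
      (1 / (2 * π * ρ)) *
        exp (-(r ^ (2 * H) * x ^ 2 - 2 * μ * x * y + s ^ (2 * H) * y ^ 2) / (2 * ρ ^ 2)))
    (hβ0 : 0 ≤ β) (hβ1 : β ≤ 1) (a b x y : ℝ) :
    |rectIncrement φ a b x y| ≤ 1 / (π * ρ) * (r ^ H * |x - a| / ρ) ^ β := by
  set R := r ^ H
  have hR : 0 < R := rpow_pos_of_pos hr H
  have hr2H : r ^ (2 * H) = R ^ 2 := by
    rw [mul_comm]
    exact_mod_cast rpow_mul_natCast hr.le H 2
  have hs2H : s ^ (2 * H) * R ^ 2 = ρ ^ 2 + μ ^ 2 := by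
    rw [hρ2, mul_rpow hs.le hr.le, hr2H]
    ring
  have hfactor : ∀ x y, φ x y = (1 / (2 * π * ρ) * exp (-y ^ 2 / (2 * R ^ 2)))
      * exp (-(R / ρ * x - μ / (R * ρ) * y) ^ 2 / 2) := fun x y => by
    rw [hφ, hr2H, mul_assoc _ (exp _), ← exp_add]
    congr 2
    field_simp
    linear_combination (-(y ^ 2)) * hs2H
  have hweight : ∀ y, 1 / (2 * π * ρ) * exp (-y ^ 2 / (2 * R ^ 2)) ≤ 1 / (2 * π * ρ) := fun y => by
    refine mul_le_of_le_one_right (by positivity) (exp_le_one_iff.mpr ?_)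
    rw [neg_div]
    exact neg_nonpos.mpr (by positivity)
  calc |rectIncrement φ a b x y|
      ≤ 2 * (1 / (2 * π * ρ)) * |R / ρ * (x - a)| ^ β :=
        abs_rectIncrement_le_of_eq_mul_gaussian hβ0 hβ1 (fun _ => by positivity) hweight
          hfactor a b x y
    _ = 1 / (π * ρ) * (R * |x - a| / ρ) ^ β := by
        rw [abs_mul, abs_div, abs_of_pos hR, abs_of_pos hρ]
        field_simp

lemma le_mul_rpow_half_of_le_of_le {D K u v β : ℝ} (hD : 0 ≤ D) (hK : 0 ≤ K) (hu : 0 ≤ u)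
    (hv : 0 ≤ v) (hDu : D ≤ K * u ^ β) (hDv : D ≤ K * v ^ β) : D ≤ K * (u * v) ^ (β / 2) := by
  refine le_of_pow_le_pow_left₀ two_ne_zero (by positivity) ?_
  calc D ^ 2 = D * D := sq D
    _ ≤ (K * u ^ β) * (K * v ^ β) := mul_le_mul hDu hDv hD (hD.trans hDu)
    _ = (K * (u * v) ^ (β / 2)) ^ 2 := by
        rw [mul_pow, ← rpow_mul_natCast (mul_nonneg hu hv)]
        push_cast
        rw [div_mul_cancel₀ β two_ne_zero, mul_rpow hu hv]
        ring

theorem stmt_8 (H s r μ ρ : ℝ) (hs : 0 < s) (hr : 0 < r) (hρ : 0 < ρ)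
    (hρ2 : ρ ^ 2 = (s * r) ^ (2 * H) - μ ^ 2)
    (φ : ℝ → ℝ → ℝ)
    (hφ : ∀ x y : ℝ, φ x y =
      (1 / (2 * π * ρ)) *
        Real.exp (-(r ^ (2 * H) * x ^ 2 - 2 * μ * x * y + s ^ (2 * H) * y ^ 2) / (2 * ρ ^ 2)))
    (β : ℝ) (hβ0 : 0 ≤ β) (hβ1 : β ≤ 1) (a b x y : ℝ) :
    |φ x y - φ x b - φ a y + φ a b| ≤
      2 * ((s * r) ^ (β * H / 2) / ρ ^ (1 + β)) * |(x - a) * (y - b)| ^ (β / 2) := by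
  have hx := abs_rectIncrement_gaussianDensity_le hs hr hρ hρ2 hφ hβ0 hβ1 a b x y
  have hy := abs_rectIncrement_gaussianDensity_le hr hs hρ (by rwa [mul_comm r s])
    (φ := fun u v => φ v u) (fun u v => by rw [hφ]; ring_nf) hβ0 hβ1 b a y x
  rw [rectIncrement_swap] at hy
  have hsrH : 0 ≤ (s * r) ^ H := (rpow_pos_of_pos (mul_pos hs hr) H).le
  have hprod : r ^ H * |x - a| / ρ * (s ^ H * |y - b| / ρ)
      = (s * r) ^ H * |(x - a) * (y - b)| / ρ ^ 2 := by
    rw [mul_rpow hs.le hr.le, abs_mul]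
    ring
  calc |rectIncrement φ a b x y|
      ≤ 1 / (π * ρ) * ((s * r) ^ H * |(x - a) * (y - b)| / ρ ^ 2) ^ (β / 2) := by
        rw [← hprod]
        exact le_mul_rpow_half_of_le_of_le (abs_nonneg _) (by positivity) (by positivity)
          (by positivity) hx hy
    _ = π⁻¹ * ((s * r) ^ (β * H / 2) / ρ ^ (1 + β) * |(x - a) * (y - b)| ^ (β / 2)) := by
        rw [div_rpow (by positivity) (sq_nonneg ρ), mul_rpow hsrH (abs_nonneg _),
          ← rpow_mul (mul_pos hs hr).le, ← rpow_natCast ρ 2, ← rpow_mul hρ.le,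
          rpow_add hρ, rpow_one]
        push_cast
        ring_nf
    _ ≤ 2 * ((s * r) ^ (β * H / 2) / ρ ^ (1 + β)) * |(x - a) * (y - b)| ^ (β / 2) := by
        rw [← mul_assoc]
        gcongr
        exact (inv_le_one_of_one_le₀ (by linarith [pi_gt_three])).trans one_le_two
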